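/- arXiv:1207.5930 — 3 statements merged into one kernel-verified Lean document; each statement's English description precedes it below -/
import Mathlib

section
/- Let c ∈ ℂ, r > 0, and let f : ℂ → ℂ be an entire function that maps the closed disk {z : |z − c| ≤ r} into the open disk {z : |z − c| < r/2}. Then f has a unique fixed point ζ in {z : |z − c| < r/2}, and for every z with |z − c| ≤ r the iterates fⁿ(z) converge to ζ as n → ∞. -/
/-!
By compactness, `‖f z - c‖ ≤ M` on the closed disk of radius `r` for some `M < r / 2`. For `w`
in the disk of radius `r / 2` the circle of radius `r / 2` around `w` lies in the disk of
radius `r`, so Cauchy's estimate gives `‖f' w‖ ≤ M / (r / 2) < 1`. Hence `f` is a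
contraction of the closed disk of radius `r / 2` into itself, and the Banach fixed point theorem
applies; a starting point in the disk of radius `r` lands in that smaller disk after one step.
-/

open Metric Set Filter Function Topology

theorem LipschitzOnWith.exists_unique_fixedPoint_tendsto_iterate {α : Type*} [MetricSpace α]
    {f : α → α} {s : Set α} {K : NNReal} (hK : K < 1) (hf : LipschitzOnWith K f s)
    (hsf : MapsTo f s s) (hs : IsComplete s) (hne : s.Nonempty) :
    ∃ ζ ∈ s, IsFixedPt f ζ ∧ (∀ ζ' ∈ s, IsFixedPt f ζ' → ζ' = ζ) ∧
      ∀ x ∈ s, Tendsto (fun n ↦ f^[n] x) atTop (𝓝 ζ) := by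
  have hcontr : ContractingWith K (hsf.restrict f s s) := ⟨hK, hf.mapsToRestrict hsf⟩
  have fixedPt_eq : ∀ ζ ∈ s, ∀ ζ' ∈ s, IsFixedPt f ζ → IsFixedPt f ζ' → ζ' = ζ :=
    fun ζ hζ ζ' hζ' hfix hfix' ↦ congrArg Subtype.val <|
      hcontr.fixedPoint_unique' (x := ⟨ζ', hζ'⟩) (y := ⟨ζ, hζ⟩)
        (Subtype.ext hfix') (Subtype.ext hfix)
  obtain ⟨x₀, hx₀⟩ := hne
  obtain ⟨ζ, hζ, hfix, -, -⟩ := hcontr.exists_fixedPoint' hs hsf hx₀ (edist_ne_top _ _)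
  refine ⟨ζ, hζ, hfix, fun ζ' hζ' hfix' ↦ fixedPt_eq ζ hζ ζ' hζ' hfix hfix', fun x hx ↦ ?_⟩
  obtain ⟨y, hy, hfixy, hxy, -⟩ := hcontr.exists_fixedPoint' hs hsf hx (edist_ne_top _ _)
  rwa [← fixedPt_eq ζ hζ y hy hfix hfixy]

theorem Complex.lipschitzOnWith_closedBall_of_norm_sub_le {f : ℂ → ℂ} (hf : Differentiable ℂ f)
    {c a : ℂ} {R M : ℝ} (hR : 0 < R) (hM : ∀ z ∈ closedBall c (2 * R), ‖f z - a‖ ≤ M) :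
    LipschitzOnWith (M / R).toNNReal f (closedBall c R) := by
  refine (convex_closedBall c R).lipschitzOnWith_of_nnnorm_deriv_le (fun z _ ↦ hf z)
    fun w hw ↦ ?_
  have hsphere : ∀ z ∈ sphere w R, ‖f z - a‖ ≤ M := fun z hz ↦ hM z <| by
    calc dist z c ≤ dist z w + dist w c := dist_triangle z w c
      _ ≤ R + R := add_le_add (mem_sphere.1 hz).le (mem_closedBall.1 hw)
      _ = 2 * R := by ring
  have hcauchy : ‖deriv f w‖ ≤ M / R := by
    simpa only [deriv_sub_const] using Complex.norm_deriv_le_of_forall_mem_sphere_norm_le hR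
      (hf.sub_const a).differentiableOn.diffContOnCl hsphere
  rw [← NNReal.coe_le_coe, coe_nnnorm]
  exact hcauchy.trans (Real.le_coe_toNNReal _)

/-- An entire function mapping the closed disk `{|z − c| ≤ r}` into the open disk
`{|z − c| < r/2}` has a unique fixed point `ζ` there, and all iterates starting in the
closed disk converge to `ζ`. -/
theorem stmt2 (c : ℂ) (r : ℝ) (hr : 0 < r) (f : ℂ → ℂ) (hf : Differentiable ℂ f)
    (hmap : ∀ z : ℂ, ‖z - c‖ ≤ r → ‖f z - c‖ < r / 2) :
    ∃ ζ : ℂ, ‖ζ - c‖ < r / 2 ∧ f ζ = ζ ∧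
      (∀ ζ' : ℂ, ‖ζ' - c‖ < r / 2 → f ζ' = ζ' → ζ' = ζ) ∧
      ∀ z : ℂ, ‖z - c‖ ≤ r →
        Filter.Tendsto (fun n : ℕ => f^[n] z) Filter.atTop (nhds ζ) := by
  obtain ⟨ε, hε, hgap⟩ := (isCompact_closedBall c r).exists_forall_le'
    (f := fun z ↦ r / 2 - ‖f z - c‖) (a := 0)
    (continuous_const.sub (hf.continuous.sub continuous_const).norm).continuousOn
    fun z hz ↦ sub_pos.2 (hmap z (mem_closedBall_iff_norm.1 hz))
  have hlip := Complex.lipschitzOnWith_closedBall_of_norm_sub_le hf (c := c) (a := c)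
    (M := r / 2 - ε) (half_pos hr) fun z hz ↦ by linarith [hgap z (by rwa [mul_div_cancel₀ r two_ne_zero] at hz)]
  have hK : ((r / 2 - ε) / (r / 2)).toNNReal < 1 := by
    rw [Real.toNNReal_lt_one, div_lt_one (half_pos hr)]
    linarith
  have hsmall : ∀ z, ‖z - c‖ ≤ r → f z ∈ closedBall c (r / 2) := fun z hz ↦
    mem_closedBall_iff_norm.2 (hmap z hz).le
  have hsf : MapsTo f (closedBall c (r / 2)) (closedBall c (r / 2)) := fun z hz ↦
    hsmall z ((mem_closedBall_iff_norm.1 hz).trans (half_le_self hr.le))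
  obtain ⟨ζ, hζ, hfix, hunique, htendsto⟩ := hlip.exists_unique_fixedPoint_tendsto_iterate hK hsf
    isClosed_closedBall.isComplete (nonempty_closedBall.2 (half_pos hr).le)
  refine ⟨ζ, hfix ▸ hmap ζ ((mem_closedBall_iff_norm.1 hζ).trans (half_le_self hr.le)), hfix,
    fun ζ' hζ' hfix' ↦ hunique ζ' (mem_closedBall_iff_norm.2 hζ'.le) hfix', fun z hz ↦ ?_⟩
  refine (tendsto_add_atTop_iff_nat 1).1 ?_
  simpa only [iterate_succ_apply] using htendsto (f z) (hsmall z hz)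
end

section
/- Let f and g be entire functions such that for all integers q ≥ 1: |f(z) + (4·n(0,q)+2)| < 1/2 for z ∈ G_{0,q}; |g(z) + (4·n(2,q)+2)| < 1/2 for z ∈ B_{0,q}; and for all p ≥ 1, q ≥ 1: |f(z) + (4·n(p,q+1)+2)| < 1/2 for z ∈ B_{p,q}; and for all p ≥ 2, q ≥ 1: |g(z) + (4·n(p,q+1)+2)| < 1/2 for z ∈ B_{p,q}. Then for every q ≥ 1 and every m ≥ 1, (g∘f)ᵐ(G_{0,q}) ⊂ B_{2, q+2(m−1)}. -/
open Complex Filter Set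

/-- `G₀ = {z : |z − 2| ≤ 1}`. -/
def G0 : Set ℂ := {z : ℂ | ‖z - 2‖ ≤ 1}

/-- `G_k = {z : |z − (4k+2)| ≤ 1} ∪ {z : Re z = 4k+2, Im z ≥ 1} ∪ {z : Re z = 4k+2, Im z ≤ −1}`. -/
def G (k : ℕ) : Set ℂ :=
  {z : ℂ | ‖z - (4 * (k : ℂ) + 2)‖ ≤ 1} ∪
  {z : ℂ | z.re = 4 * (k : ℝ) + 2 ∧ 1 ≤ z.im} ∪
  {z : ℂ | z.re = 4 * (k : ℝ) + 2 ∧ z.im ≤ -1}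

/-- `B_k = {z : |z + (4k+2)| ≤ 1} ∪ {z : Re z = −(4k+2), Im z ≥ 1} ∪ {z : Re z = −(4k+2), Im z ≤ −1}`. -/
def B (k : ℕ) : Set ℂ :=
  {z : ℂ | ‖z + (4 * (k : ℂ) + 2)‖ ≤ 1} ∪
  {z : ℂ | z.re = -(4 * (k : ℝ) + 2) ∧ 1 ≤ z.im} ∪
  {z : ℂ | z.re = -(4 * (k : ℝ) + 2) ∧ z.im ≤ -1}

/-- `L_k = {z : Re z = 4k}`. -/
def L (k : ℕ) : Set ℂ := {z : ℂ | z.re = 4 * (k : ℝ)}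

/-- `M_k = {z : Re z = −4k}`. -/
def M (k : ℕ) : Set ℂ := {z : ℂ | z.re = -(4 * (k : ℝ))}

/-- `T = G₀ ∪ ⋃_{k≥1} (L_k ∪ M_k)`. -/
def T : Set ℂ := G0 ∪ ⋃ k ∈ {k : ℕ | 1 ≤ k}, (L k ∪ M k)

/-- `n(p,q) = q(q−1)/2 + 1 + pq + p(p+1)/2`. -/
def nn (p q : ℕ) : ℕ := q * (q - 1) / 2 + 1 + p * q + p * (p + 1) / 2

/-- `G_{p,q} = G_{n(p,q)}`. -/
def Gpq (p q : ℕ) : Set ℂ := G (nn p q)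

/-- `B_{p,q} = B_{n(p,q)}`. -/
def Bpq (p q : ℕ) : Set ℂ := B (nn p q)

lemma mapsTo_B_of_norm_add_lt {f : ℂ → ℂ} {s : Set ℂ} {n : ℕ}
    (h : ∀ z ∈ s, ‖f z + (4 * (n : ℂ) + 2)‖ < 1/2) : MapsTo f s (B n) :=
  fun z hz => Or.inl (Or.inl ((h z hz).le.trans (by norm_num)))

theorem stmt8_general (f g : ℂ → ℂ)
    (h1 : ∀ q : ℕ, 1 ≤ q → ∀ z ∈ Gpq 0 q,
      ‖f z + (4 * (nn 0 q : ℂ) + 2)‖ < 1/2)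
    (h2 : ∀ q : ℕ, 1 ≤ q → ∀ z ∈ Bpq 0 q,
      ‖g z + (4 * (nn 2 q : ℂ) + 2)‖ < 1/2)
    (h3 : ∀ p q : ℕ, 1 ≤ p → 1 ≤ q → ∀ z ∈ Bpq p q,
      ‖f z + (4 * (nn p (q+1) : ℂ) + 2)‖ < 1/2)
    (h4 : ∀ p q : ℕ, 2 ≤ p → 1 ≤ q → ∀ z ∈ Bpq p q,
      ‖g z + (4 * (nn p (q+1) : ℂ) + 2)‖ < 1/2) :
    ∀ q : ℕ, 1 ≤ q → ∀ m : ℕ, 1 ≤ m →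
      (g ∘ f)^[m] '' Gpq 0 q ⊆ Bpq 2 (q + 2 * (m - 1)) := by
  intro q hq m hm
  have start : MapsTo (g ∘ f) (Gpq 0 q) (Bpq 2 q) :=
    (mapsTo_B_of_norm_add_lt (h2 q hq)).comp (mapsTo_B_of_norm_add_lt (h1 q hq))
  have step : ∀ r, 1 ≤ r → MapsTo (g ∘ f) (Bpq 2 r) (Bpq 2 (r + 2)) := fun r hr =>
    (mapsTo_B_of_norm_add_lt (h4 2 (r + 1) le_rfl (by omega))).comp
      (mapsTo_B_of_norm_add_lt (h3 2 r (by norm_num) hr))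
  induction m, hm using Nat.le_induction with
  | base => simpa using start.image_subset
  | succ m hm ih =>
    rw [Function.iterate_succ', image_comp, show q + 2 * (m + 1 - 1) = q + 2 * (m - 1) + 2 by omega]
    exact (image_mono ih).trans (step _ (by omega)).image_subset

theorem stmt8 (f g : ℂ → ℂ) (hf : Differentiable ℂ f) (hg : Differentiable ℂ g)
    (h1 : ∀ q : ℕ, 1 ≤ q → ∀ z ∈ Gpq 0 q,
      ‖f z + (4 * (nn 0 q : ℂ) + 2)‖ < 1/2)
    (h2 : ∀ q : ℕ, 1 ≤ q → ∀ z ∈ Bpq 0 q,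
      ‖g z + (4 * (nn 2 q : ℂ) + 2)‖ < 1/2)
    (h3 : ∀ p q : ℕ, 1 ≤ p → 1 ≤ q → ∀ z ∈ Bpq p q,
      ‖f z + (4 * (nn p (q+1) : ℂ) + 2)‖ < 1/2)
    (h4 : ∀ p q : ℕ, 2 ≤ p → 1 ≤ q → ∀ z ∈ Bpq p q,
      ‖g z + (4 * (nn p (q+1) : ℂ) + 2)‖ < 1/2) :
    ∀ q : ℕ, 1 ≤ q → ∀ m : ℕ, 1 ≤ m →
      (g ∘ f)^[m] '' Gpq 0 q ⊆ Bpq 2 (q + 2 * (m - 1)) :=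
  stmt8_general f g h1 h2 h3 h4
end

section
/- Let f and g be entire functions such that for all integers q ≥ 1: |f(z) + (4·n(0,q)+2)| < 1/2 for z ∈ G_{0,q}; |g(z) + (4·n(2,q)+2)| < 1/2 for z ∈ B_{0,q}; |f(z) + (4·n(1,q)+2)| < 1/2 for z ∈ B_{2,q}; |g(z) − (4·n(0,q)+2)| < 1/2 for z ∈ B_{1,q}; |g(z) + (4·n(1,q)+2)| < 1/2 for z ∈ G_{0,q}; |f(z) + (4·n(3,q)+2)| < 1/2 for z ∈ B_{1,q}; and for all p ≥ 3, q ≥ 1: |f(z) + (4·n(p,q+1)+2)| < 1/2 for z ∈ B_{p,q}; and for all p ≥ 2, q ≥ 1: |g(z) + (4·n(p,q+1)+2)| < 1/2 for z ∈ B_{p,q}. Then for every q ≥ 1: (g∘f)∘(g∘f) maps G_{0,q} into the open disk {z : |z − (4·n(0,q)+2)| < 1/2} ⊂ G_{0,q}, while for every m ≥ 1, (f∘g)ᵐ(G_{0,q}) ⊂ B_{3, q+2(m−1)}. -/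
open Complex Filter Set

/-!
Each hypothesis sends one of the sets into the half-disk about the centre of another, so orbits
are followed by chaining them: `G_{0,q} → B_{0,q} → B_{2,q} → B_{1,q} →` back near the centre of
`G_{0,q}` under `f, g, f, g`, while `G_{0,q} → B_{1,q} → B_{3,q}` under `g, f`, after which every
application of `f` or `g` raises `q` by one.
-/

lemma mem_B_of_norm_add_lt_half {k : ℕ} {w : ℂ} (h : ‖w + (4 * (k : ℂ) + 2)‖ < 1 / 2) :
    w ∈ B k :=
  Or.inl (Or.inl (h.le.trans (by norm_num)))

lemma mem_G_of_norm_sub_lt_half {k : ℕ} {w : ℂ} (h : ‖w - (4 * (k : ℂ) + 2)‖ < 1 / 2) :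
    w ∈ G k :=
  Or.inl (Or.inl (h.le.trans (by norm_num)))

lemma Set.MapsTo.iterate_of_shift {α : Type*} {φ : α → α} {S : ℕ → Set α} {d : ℕ}
    (h : ∀ q, 1 ≤ q → MapsTo φ (S q) (S (q + d))) {q : ℕ} (hq : 1 ≤ q) (m : ℕ) :
    MapsTo φ^[m] (S q) (S (q + d * m)) := by
  induction m with
  | zero => exact mapsTo_id _
  | succ m ih =>
    rw [Function.iterate_succ', mul_add_one, ← add_assoc]
    exact (h _ (hq.trans (Nat.le_add_right _ _))).comp ih

theorem stmt10_general (f g : ℂ → ℂ)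
    (h1 : ∀ q : ℕ, 1 ≤ q → ∀ z ∈ Gpq 0 q,
      ‖f z + (4 * (nn 0 q : ℂ) + 2)‖ < 1/2)
    (h2 : ∀ q : ℕ, 1 ≤ q → ∀ z ∈ Bpq 0 q,
      ‖g z + (4 * (nn 2 q : ℂ) + 2)‖ < 1/2)
    (h3 : ∀ q : ℕ, 1 ≤ q → ∀ z ∈ Bpq 2 q,
      ‖f z + (4 * (nn 1 q : ℂ) + 2)‖ < 1/2)
    (h4 : ∀ q : ℕ, 1 ≤ q → ∀ z ∈ Bpq 1 q,
      ‖g z - (4 * (nn 0 q : ℂ) + 2)‖ < 1/2)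
    (h5 : ∀ q : ℕ, 1 ≤ q → ∀ z ∈ Gpq 0 q,
      ‖g z + (4 * (nn 1 q : ℂ) + 2)‖ < 1/2)
    (h6 : ∀ q : ℕ, 1 ≤ q → ∀ z ∈ Bpq 1 q,
      ‖f z + (4 * (nn 3 q : ℂ) + 2)‖ < 1/2)
    (h7 : ∀ p q : ℕ, 3 ≤ p → 1 ≤ q → ∀ z ∈ Bpq p q,
      ‖f z + (4 * (nn p (q+1) : ℂ) + 2)‖ < 1/2)
    (h8 : ∀ p q : ℕ, 2 ≤ p → 1 ≤ q → ∀ z ∈ Bpq p q,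
      ‖g z + (4 * (nn p (q+1) : ℂ) + 2)‖ < 1/2) :
    ∀ q : ℕ, 1 ≤ q →
      Set.MapsTo ((g ∘ f) ∘ (g ∘ f)) (Gpq 0 q)
        {z : ℂ | ‖z - (4 * (nn 0 q : ℂ) + 2)‖ < 1/2} ∧
      {z : ℂ | ‖z - (4 * (nn 0 q : ℂ) + 2)‖ < 1/2} ⊆ Gpq 0 q ∧
      ∀ m : ℕ, 1 ≤ m → (f ∘ g)^[m] '' Gpq 0 q ⊆ Bpq 3 (q + 2 * (m - 1)) := by
  intro q hq
  have hf3 : ∀ q, 1 ≤ q → MapsTo f (Bpq 3 q) (Bpq 3 (q + 1)) := fun q hq z hz =>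
    mem_B_of_norm_add_lt_half (h7 3 q le_rfl hq z hz)
  have hg3 : ∀ q, 1 ≤ q → MapsTo g (Bpq 3 q) (Bpq 3 (q + 1)) := fun q hq z hz =>
    mem_B_of_norm_add_lt_half (h8 3 q (by norm_num) hq z hz)
  have hfg3 : ∀ q, 1 ≤ q → MapsTo (f ∘ g) (Bpq 3 q) (Bpq 3 (q + 2)) := fun q hq =>
    (hf3 (q + 1) (by omega)).comp (hg3 q hq)
  refine ⟨fun z hz => ?_, fun z hz => mem_G_of_norm_sub_lt_half hz, ?_⟩
  · have hfz : f z ∈ Bpq 0 q := mem_B_of_norm_add_lt_half (h1 q hq z hz)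
    have hgfz : g (f z) ∈ Bpq 2 q := mem_B_of_norm_add_lt_half (h2 q hq _ hfz)
    exact h4 q hq _ (mem_B_of_norm_add_lt_half (h3 q hq _ hgfz))
  · rintro m hm _ ⟨z, hz, rfl⟩
    obtain ⟨m, rfl⟩ : ∃ k, m = k + 1 := ⟨m - 1, by omega⟩
    have hfgz : (f ∘ g) z ∈ Bpq 3 q :=
      mem_B_of_norm_add_lt_half (h6 q hq _ (mem_B_of_norm_add_lt_half (h5 q hq z hz)))
    rw [Function.iterate_succ_apply, Nat.add_sub_cancel]
    exact Set.MapsTo.iterate_of_shift hfg3 hq m hfgz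

theorem stmt10 (f g : ℂ → ℂ) (hf : Differentiable ℂ f) (hg : Differentiable ℂ g)
    (h1 : ∀ q : ℕ, 1 ≤ q → ∀ z ∈ Gpq 0 q,
      ‖f z + (4 * (nn 0 q : ℂ) + 2)‖ < 1/2)
    (h2 : ∀ q : ℕ, 1 ≤ q → ∀ z ∈ Bpq 0 q,
      ‖g z + (4 * (nn 2 q : ℂ) + 2)‖ < 1/2)
    (h3 : ∀ q : ℕ, 1 ≤ q → ∀ z ∈ Bpq 2 q,
      ‖f z + (4 * (nn 1 q : ℂ) + 2)‖ < 1/2)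
    (h4 : ∀ q : ℕ, 1 ≤ q → ∀ z ∈ Bpq 1 q,
      ‖g z - (4 * (nn 0 q : ℂ) + 2)‖ < 1/2)
    (h5 : ∀ q : ℕ, 1 ≤ q → ∀ z ∈ Gpq 0 q,
      ‖g z + (4 * (nn 1 q : ℂ) + 2)‖ < 1/2)
    (h6 : ∀ q : ℕ, 1 ≤ q → ∀ z ∈ Bpq 1 q,
      ‖f z + (4 * (nn 3 q : ℂ) + 2)‖ < 1/2)
    (h7 : ∀ p q : ℕ, 3 ≤ p → 1 ≤ q → ∀ z ∈ Bpq p q,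
      ‖f z + (4 * (nn p (q+1) : ℂ) + 2)‖ < 1/2)
    (h8 : ∀ p q : ℕ, 2 ≤ p → 1 ≤ q → ∀ z ∈ Bpq p q,
      ‖g z + (4 * (nn p (q+1) : ℂ) + 2)‖ < 1/2) :
    ∀ q : ℕ, 1 ≤ q →
      Set.MapsTo ((g ∘ f) ∘ (g ∘ f)) (Gpq 0 q)
        {z : ℂ | ‖z - (4 * (nn 0 q : ℂ) + 2)‖ < 1/2} ∧
      {z : ℂ | ‖z - (4 * (nn 0 q : ℂ) + 2)‖ < 1/2} ⊆ Gpq 0 q ∧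
      ∀ m : ℕ, 1 ≤ m → (f ∘ g)^[m] '' Gpq 0 q ⊆ Bpq 3 (q + 2 * (m - 1)) :=
  stmt10_general f g h1 h2 h3 h4 h5 h6 h7 h8
end
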